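/- Identify ℝ² with ℂ and let H² = {z ∈ ℂ : Im z > 0}. Let a,b,c,d ∈ ℝ with a·d − b·c = 1 and c ≠ 0, and let f(z) = (a·z+b)/(c·z+d), which is a Möbius transformation of H² onto itself. Then for all distinct x,y ∈ H², v_{H²}(f(x),f(y)) ≤ 2·v_{H²}(x,y), and the supremum over all distinct x,y ∈ H² of the ratio v_{H²}(f(x),f(y))/v_{H²}(x,y) equals 2. -/

import Mathlib

open EuclideanGeometry Real Set

/-- The visual angle metric on a planar domain `G ⊊ ℂ`:
`v_G(x,y) = sup_{z ∈ ∂G} ∠(x,z,y)`. -/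
noncomputable def visualAngleC (G : Set ℂ) (x y : ℂ) : ℝ :=
  sSup ((fun z => EuclideanGeometry.angle x z y) '' frontier G)

/-- The upper half plane `H² = {z ∈ ℂ : Im z > 0}`. -/
def upperHalfC : Set ℂ := {z | 0 < z.im}

/-- The real Möbius transformation `z ↦ (az+b)/(cz+d)` of the upper half plane. -/
noncomputable def realMoebius (a b c d : ℝ) (z : ℂ) : ℂ :=
  ((a : ℂ) * z + (b : ℂ)) / ((c : ℂ) * z + (d : ℂ))

/-!
Write `f = T ∘ J ∘ A` with `A z = c²z + cd`, `J z = -z⁻¹` and `T w = w + a/c`. Real affine maps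
preserve the real axis and all angles, so `v` is invariant under `A` and `T`, and it suffices to
treat `J`. A boundary point of `H²` is either `0 = J(∞)`, where `∠(Jx, 0, Jy) = ∠(x, 0, y)`, or
`J t` with `t ≠ 0` real; then `(Jx - Jt)/(Jy - Jt) = ((x - t)/(y - t)) · (y/x)`, and the triangle
inequality for angles gives `∠(Jx, Jt, Jy) ≤ ∠(x, t, y) + ∠(x, 0, y) ≤ 2 v(x, y)`.
Equality holds for `x = 2 + 4i`, `y = 2 + i`: every angle subtended by this pair on the real axis
has cosine at least `4/5`, while `∠(Jx, -1/4, Jy) = arccos (7/25) = 2 arccos (4/5)`.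
-/

open Complex

lemma frontier_upperHalfC : frontier upperHalfC = range ((↑) : ℝ → ℂ) := by
  ext z
  simp only [upperHalfC, frontier_setOfPred_lt_im, mem_ofPred_eq, mem_range]
  exact ⟨fun hz => ⟨z.re, Complex.ext (by simp) (by simp [hz])⟩, by rintro ⟨r, rfl⟩; simp⟩

lemma visualAngleC_upperHalfC_eq_iSup (x y : ℂ) :
    visualAngleC upperHalfC x y = ⨆ r : ℝ, ∠ x r y := by
  rw [visualAngleC, frontier_upperHalfC, ← range_comp, sSup_range]
  rfl

lemma bddAbove_range_angle (x y : ℂ) : BddAbove (range fun r : ℝ => ∠ x r y) :=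
  ⟨π, by rintro _ ⟨r, rfl⟩; exact angle_le_pi _ _ _⟩

lemma angle_le_visualAngleC_upperHalfC (x y : ℂ) (r : ℝ) :
    ∠ x r y ≤ visualAngleC upperHalfC x y := by
  rw [visualAngleC_upperHalfC_eq_iSup]
  exact le_ciSup (bddAbove_range_angle x y) r

lemma visualAngleC_upperHalfC_nonneg (x y : ℂ) : 0 ≤ visualAngleC upperHalfC x y :=
  (angle_nonneg _ _ _).trans (angle_le_visualAngleC_upperHalfC x y 0)

lemma visualAngleC_upperHalfC_le {x y : ℂ} {θ : ℝ} (h : ∀ r : ℝ, ∠ x r y ≤ θ) :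
    visualAngleC upperHalfC x y ≤ θ := by
  rw [visualAngleC_upperHalfC_eq_iSup]
  exact ciSup_le h

def realAffine (α β : ℝ) (z : ℂ) : ℂ := α * z + β

lemma realAffine_surjective {α : ℝ} (hα : α ≠ 0) (β : ℝ) :
    Function.Surjective (realAffine α β) := fun w =>
  ⟨(w - β) / α, by
    have : (α : ℂ) ≠ 0 := ofReal_ne_zero.2 hα
    simp only [realAffine]; field_simp; ring⟩

lemma realAffine_mem_upperHalfC_iff {α : ℝ} (hα : 0 < α) (β : ℝ) {z : ℂ} :
    realAffine α β z ∈ upperHalfC ↔ z ∈ upperHalfC := by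
  simp [upperHalfC, realAffine, mul_pos_iff_of_pos_left hα]

lemma angle_realAffine {α : ℝ} (hα : α ≠ 0) (β : ℝ) (x z y : ℂ) :
    ∠ (realAffine α β x) (realAffine α β z) (realAffine α β y) = ∠ x z y := by
  simp only [EuclideanGeometry.angle, vsub_eq_sub, realAffine, add_sub_add_right_eq_sub,
    ← mul_sub]
  exact angle_mul_left (ofReal_ne_zero.2 hα) _ _

lemma visualAngleC_upperHalfC_realAffine {α : ℝ} (hα : α ≠ 0) (β : ℝ) (x y : ℂ) :
    visualAngleC upperHalfC (realAffine α β x) (realAffine α β y) =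
      visualAngleC upperHalfC x y := by
  have hr : ∀ r : ℝ, ((α * r + β : ℝ) : ℂ) = realAffine α β r := fun r => by
    simp [realAffine]
  rw [visualAngleC_upperHalfC_eq_iSup, visualAngleC_upperHalfC_eq_iSup,
    ← (show Function.Surjective fun r : ℝ => α * r + β from ?_).iSup_comp]
  · simp only [hr, angle_realAffine hα]
  · intro s
    exact ⟨(s - β) / α, by field_simp; ring⟩

lemma ne_ofReal_of_mem_upperHalfC {z : ℂ} (hz : z ∈ upperHalfC) (r : ℝ) : z ≠ r := by
  rintro rfl
  simp [upperHalfC] at hz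

lemma Complex.angle_inv_inv {x y : ℂ} (hx : x ≠ 0) (hy : y ≠ 0) :
    InnerProductGeometry.angle x⁻¹ y⁻¹ = InnerProductGeometry.angle x y := by
  rw [← angle_mul_left (mul_ne_zero hx hy), show x * y * x⁻¹ = y by field_simp,
    mul_inv_cancel_right₀ hy, InnerProductGeometry.angle_comm]

lemma angle_neg_inv_zero_neg_inv {x y : ℂ} (hx : x ≠ 0) (hy : y ≠ 0) :
    ∠ (-x⁻¹) 0 (-y⁻¹) = ∠ x 0 y := by
  simp only [EuclideanGeometry.angle, vsub_eq_sub, sub_zero, InnerProductGeometry.angle_neg_neg,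
    angle_inv_inv hx hy]

lemma angle_neg_inv_le {x y z : ℂ} (hx : x ≠ 0) (hy : y ≠ 0) (hz : z ≠ 0) (hyz : y ≠ z) :
    ∠ (-x⁻¹) (-z⁻¹) (-y⁻¹) ≤ ∠ x z y + ∠ x 0 y := by
  have hsub : ∀ w : ℂ, w ≠ 0 → -w⁻¹ - -z⁻¹ = (w - z) * w⁻¹ * z⁻¹ := fun w hw => by
    field_simp; ring
  calc ∠ (-x⁻¹) (-z⁻¹) (-y⁻¹)
      = InnerProductGeometry.angle ((x - z) * x⁻¹) ((y - z) * y⁻¹) := by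
        simp only [EuclideanGeometry.angle, vsub_eq_sub, hsub x hx, hsub y hy,
          angle_mul_right (inv_ne_zero hz)]
    _ ≤ InnerProductGeometry.angle ((x - z) * x⁻¹) ((y - z) * x⁻¹) +
          InnerProductGeometry.angle ((y - z) * x⁻¹) ((y - z) * y⁻¹) :=
        InnerProductGeometry.angle_le_angle_add_angle _ _ _
    _ = ∠ x z y + ∠ x 0 y := by
        rw [angle_mul_right (inv_ne_zero hx), angle_mul_left (sub_ne_zero.2 hyz),
          angle_inv_inv hx hy]
        simp [EuclideanGeometry.angle]

lemma visualAngleC_upperHalfC_neg_inv_le {x y : ℂ} (hx : x ∈ upperHalfC) (hy : y ∈ upperHalfC) :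
    visualAngleC upperHalfC (-x⁻¹) (-y⁻¹) ≤ 2 * visualAngleC upperHalfC x y := by
  have hx0 : x ≠ 0 := by exact_mod_cast ne_ofReal_of_mem_upperHalfC hx 0
  have hy0 : y ≠ 0 := by exact_mod_cast ne_ofReal_of_mem_upperHalfC hy 0
  have hv0 : ∠ x 0 y ≤ visualAngleC upperHalfC x y := by
    exact_mod_cast angle_le_visualAngleC_upperHalfC x y 0
  refine visualAngleC_upperHalfC_le fun r => ?_
  rcases eq_or_ne r 0 with rfl | hr
  · rw [ofReal_zero, angle_neg_inv_zero_neg_inv hx0 hy0]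
    linarith [visualAngleC_upperHalfC_nonneg x y]
  · have hr' : (r : ℂ) = -((-r⁻¹ : ℝ) : ℂ)⁻¹ := by push_cast; simp
    rw [hr']
    calc _ ≤ ∠ x (-r⁻¹ : ℝ) y + ∠ x 0 y :=
          angle_neg_inv_le hx0 hy0 (by simpa using hr) (ne_ofReal_of_mem_upperHalfC hy _)
      _ ≤ 2 * visualAngleC upperHalfC x y := by
          linarith [angle_le_visualAngleC_upperHalfC x y (-r⁻¹)]

lemma mul_add_ne_zero_of_mem_upperHalfC {c d : ℝ} (hc : c ≠ 0) {z : ℂ} (hz : z ∈ upperHalfC) :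
    z * c + d ≠ 0 := by
  intro h
  have := congrArg im h
  simp only [add_im, mul_im, ofReal_re, ofReal_im, mul_zero, zero_add, add_zero, zero_im] at this
  exact (mul_ne_zero (ne_of_gt hz) hc) this

lemma realMoebius_eq_realAffine_neg_inv {a b c d : ℝ} (h : a * d - b * c = 1) (hc : c ≠ 0)
    {z : ℂ} (hz : z * c + d ≠ 0) :
    realMoebius a b c d z = realAffine 1 (a / c) (-(realAffine (c ^ 2) (c * d) z)⁻¹) := by
  have hc' : (c : ℂ) ≠ 0 := ofReal_ne_zero.2 hc
  have h' : (a : ℂ) * d - b * c = 1 := by exact_mod_cast h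
  simp only [realMoebius, realAffine]
  push_cast
  rw [show (c : ℂ) ^ 2 * z + c * d = c * (c * z + d) by ring]
  field_simp
  linear_combination -h'

lemma visualAngleC_upperHalfC_realMoebius {a b c d : ℝ} (h : a * d - b * c = 1) (hc : c ≠ 0)
    {x y : ℂ} (hx : x ∈ upperHalfC) (hy : y ∈ upperHalfC) :
    visualAngleC upperHalfC (realMoebius a b c d x) (realMoebius a b c d y) =
      visualAngleC upperHalfC (-(realAffine (c ^ 2) (c * d) x)⁻¹)
        (-(realAffine (c ^ 2) (c * d) y)⁻¹) := by
  rw [realMoebius_eq_realAffine_neg_inv h hc (mul_add_ne_zero_of_mem_upperHalfC hc hx),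
    realMoebius_eq_realAffine_neg_inv h hc (mul_add_ne_zero_of_mem_upperHalfC hc hy),
    visualAngleC_upperHalfC_realAffine one_ne_zero]

lemma visualAngleC_upperHalfC_realMoebius_le {a b c d : ℝ} (h : a * d - b * c = 1) (hc : c ≠ 0)
    {x y : ℂ} (hx : x ∈ upperHalfC) (hy : y ∈ upperHalfC) :
    visualAngleC upperHalfC (realMoebius a b c d x) (realMoebius a b c d y) ≤
      2 * visualAngleC upperHalfC x y := by
  have hc2 : 0 < c ^ 2 := by positivity
  rw [visualAngleC_upperHalfC_realMoebius h hc hx hy,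
    ← visualAngleC_upperHalfC_realAffine hc2.ne' (c * d) x y]
  exact visualAngleC_upperHalfC_neg_inv_le ((realAffine_mem_upperHalfC_iff hc2 _).2 hx)
    ((realAffine_mem_upperHalfC_iff hc2 _).2 hy)

lemma angle_two_add_four_mul_I_le (r : ℝ) : ∠ (2 + 4 * I) r (2 + I) ≤ arccos (4 / 5) := by
  set u : ℂ := 2 + 4 * I - r
  set v : ℂ := 2 + I - r
  have hu : ‖u‖ ^ 2 = (2 - r) ^ 2 + 16 := by simp [u, Complex.sq_norm, normSq_apply]; ring
  have hv : ‖v‖ ^ 2 = (2 - r) ^ 2 + 1 := by simp [v, Complex.sq_norm, normSq_apply]; ring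
  have huv : inner ℝ u v = (2 - r) ^ 2 + 4 := by simp [u, v, Complex.inner]; ring
  have hnorm : ‖u‖ * ‖v‖ ≤ 5 / 4 * ((2 - r) ^ 2 + 4) := by
    refine (pow_le_pow_iff_left₀ (by positivity) (by positivity) two_ne_zero).1 ?_
    rw [mul_pow, hu, hv]
    nlinarith [sq_nonneg ((2 - r) ^ 2 - 4)]
  have hpos : 0 < ‖u‖ * ‖v‖ := by
    have : u ≠ 0 := fun h0 => by simpa [u] using congrArg im h0
    have : v ≠ 0 := fun h0 => by simpa [v] using congrArg im h0
    positivity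
  refine arccos_le_arccos ?_
  rw [vsub_eq_sub, vsub_eq_sub, huv, le_div_iff₀ hpos]
  linarith

lemma angle_neg_inv_two_add_four_mul_I :
    ∠ (-(2 + 4 * I)⁻¹) (-4⁻¹ : ℝ) (-(2 + I)⁻¹) = arccos (7 / 25) := by
  have e₁ : -(2 + 4 * I)⁻¹ - ((-4⁻¹ : ℝ) : ℂ) = 20⁻¹ * (3 + 4 * I) := by
    apply Complex.ext <;> simp [inv_re, inv_im, normSq_apply] <;> norm_num
  have e₂ : -(2 + I)⁻¹ - ((-4⁻¹ : ℝ) : ℂ) = 20⁻¹ * (-3 + 4 * I) := by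
    apply Complex.ext <;> simp [inv_re, inv_im, normSq_apply] <;> norm_num
  have n₁ : ‖3 + 4 * I‖ = 5 := by
    rw [norm_eq_sqrt_sq_add_sq, sqrt_eq_iff_mul_self_eq] <;> simp <;> norm_num
  have n₂ : ‖-3 + 4 * I‖ = 5 := by
    rw [norm_eq_sqrt_sq_add_sq, sqrt_eq_iff_mul_self_eq] <;> simp <;> norm_num
  rw [EuclideanGeometry.angle, vsub_eq_sub, vsub_eq_sub, e₁, e₂, angle_mul_left (by norm_num),
    InnerProductGeometry.angle, n₁, n₂]
  norm_num [Complex.inner]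

lemma arccos_seven_div_twentyfive : arccos (7 / 25) = 2 * arccos (4 / 5) := by
  have h0 : 0 ≤ 2 * arccos (4 / 5) := mul_nonneg zero_le_two (arccos_nonneg _)
  have hπ : 2 * arccos (4 / 5) ≤ π := by
    linarith [arccos_le_pi_div_two.2 (by norm_num : (0 : ℝ) ≤ 4 / 5)]
  rw [← arccos_cos h0 hπ, Real.cos_two_mul, cos_arccos (by norm_num) (by norm_num)]
  norm_num

lemma visualAngleC_upperHalfC_neg_inv_two_add_four_mul_I :
    visualAngleC upperHalfC (-(2 + 4 * I)⁻¹) (-(2 + I)⁻¹) =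
        2 * visualAngleC upperHalfC (2 + 4 * I) (2 + I) ∧
      0 < visualAngleC upperHalfC (2 + 4 * I) (2 + I) := by
  have hle := visualAngleC_upperHalfC_neg_inv_le (x := 2 + 4 * I) (y := 2 + I)
    (by simp [upperHalfC]) (by simp [upperHalfC])
  have hv : visualAngleC upperHalfC (2 + 4 * I) (2 + I) ≤ arccos (4 / 5) :=
    visualAngleC_upperHalfC_le angle_two_add_four_mul_I_le
  have hJ : 2 * arccos (4 / 5) ≤ visualAngleC upperHalfC (-(2 + 4 * I)⁻¹) (-(2 + I)⁻¹) := by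
    rw [← arccos_seven_div_twentyfive, ← angle_neg_inv_two_add_four_mul_I]
    exact angle_le_visualAngleC_upperHalfC _ _ _
  have hpos : 0 < arccos (4 / 5) := arccos_pos.2 (by norm_num)
  exact ⟨le_antisymm hle (by linarith), by linarith⟩

theorem stmt4 (a b c d : ℝ) (h : a * d - b * c = 1) (hc : c ≠ 0) :
    (∀ x ∈ upperHalfC, ∀ y ∈ upperHalfC, x ≠ y →
      visualAngleC upperHalfC (realMoebius a b c d x) (realMoebius a b c d y) ≤
        2 * visualAngleC upperHalfC x y) ∧
    sSup {r : ℝ | ∃ x ∈ upperHalfC, ∃ y ∈ upperHalfC, x ≠ y ∧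
      r = visualAngleC upperHalfC (realMoebius a b c d x) (realMoebius a b c d y) /
            visualAngleC upperHalfC x y} = 2 := by
  refine ⟨fun x hx y hy _ => visualAngleC_upperHalfC_realMoebius_le h hc hx hy, ?_⟩
  have hc2 : 0 < c ^ 2 := by positivity
  obtain ⟨x₀, hx₀⟩ := realAffine_surjective hc2.ne' (c * d) (2 + 4 * I)
  obtain ⟨y₀, hy₀⟩ := realAffine_surjective hc2.ne' (c * d) (2 + I)
  have hx₀H : x₀ ∈ upperHalfC :=
    (realAffine_mem_upperHalfC_iff hc2 (c * d)).1 (by simp [hx₀, upperHalfC])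
  have hy₀H : y₀ ∈ upperHalfC :=
    (realAffine_mem_upperHalfC_iff hc2 (c * d)).1 (by simp [hy₀, upperHalfC])
  obtain ⟨hval, hpos⟩ := visualAngleC_upperHalfC_neg_inv_two_add_four_mul_I
  refine IsGreatest.csSup_eq ⟨⟨x₀, hx₀H, y₀, hy₀H, ?_, ?_⟩, ?_⟩
  · rintro rfl
    simpa using congrArg im (hx₀.symm.trans hy₀)
  · rw [visualAngleC_upperHalfC_realMoebius h hc hx₀H hy₀H,
      ← visualAngleC_upperHalfC_realAffine hc2.ne' (c * d) x₀ y₀, hx₀, hy₀, hval,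
      mul_div_cancel_right₀ _ hpos.ne']
  · rintro r ⟨x, hx, y, hy, -, rfl⟩
    exact div_le_of_le_mul₀ (visualAngleC_upperHalfC_nonneg x y) zero_le_two
      (visualAngleC_upperHalfC_realMoebius_le h hc hx hy)
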